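/- (Theorem 2) Assume hypothesis H (the cited quadratic-stability lemma of Henrion et al., stated in the context). Suppose each A_i(s) has degree at most l (i.e. A_i(s) = A_0^i + A_1^i s + ⋯ + A_l^i s^l with A_t^i ∈ Matrix (Fin n) (Fin n) ℝ), and that det M ≠ 0 for every member M of MA. Let B_1(s), …, B_{2^m}(s) be the members of the vertex set K_MA (the matrices ∑_i a_i(v) • A_i for v ∈ V), with coefficient matrices ℬ_1, …, ℬ_{2^m}. If there exist a matrix Q ∈ Matrix (Fin (2nl)) (Fin n) ℂ and Hermitian positive definite matrices P_1, …, P_{2^m} ∈ Matrix (Fin (nl)) (Fin (nl)) ℂ such that for every i the Hermitian matrix Rᴴ (B ⊗ P_i) R + ℬ_iᴴ Qᴴ R + Rᴴ Q ℬ_i is negative definite, then every member of MA is D_B-stable; that is, MA is robustly D_B-stable. -/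

import Mathlib

open Polynomial Matrix Kronecker

/-- A complex matrix is positive definite if it is Hermitian and
`re (xᴴ M x) > 0` for every nonzero vector `x`. -/
def IsCPosDef {ι : Type*} [Fintype ι] (M : Matrix ι ι ℂ) : Prop :=
  M.IsHermitian ∧ ∀ x : ι → ℂ, x ≠ 0 → 0 < (star x ⬝ᵥ M.mulVec x).re

/-- A complex matrix is negative definite if `-M` is positive definite. -/
def IsCNegDef {ι : Type*} [Fintype ι] (M : Matrix ι ι ℂ) : Prop :=
  IsCPosDef (-M)

/-- The LMI region associated with the Hermitian matrix `B`. -/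
def DRegion (B : Matrix (Fin 2) (Fin 2) ℂ) : Set ℂ :=
  {s : ℂ | (star ![1, s] ⬝ᵥ B.mulVec ![1, s]).re < 0}

/-- A polynomial matrix is `D`-stable if its determinant is nonzero and all the
complex roots of its determinant lie in `D`. -/
def DStable {n : ℕ} (D : Set ℂ) (A : Matrix (Fin n) (Fin n) ℝ[X]) : Prop :=
  A.det ≠ 0 ∧ ∀ z : ℂ, aeval z A.det = 0 → z ∈ D

/-- The structure matrix `R` of Definition 9: writing `x : ℂ^{(l+1)n}` in `l+1`
blocks `x_0, …, x_l` of size `n`, we have `R.mulVec x = (x_0,…,x_{l-1}; x_1,…,x_l)`. -/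
noncomputable def structR (n l : ℕ) :
    Matrix (Fin 2 × Fin l × Fin n) (Fin (l + 1) × Fin n) ℂ :=
  fun p q => if (q.1 : ℕ) = (p.2.1 : ℕ) + (p.1 : ℕ) ∧ q.2 = p.2.2 then 1 else 0

/-- The coefficient matrix `𝒞 = (C_0, …, C_l)` of a polynomial matrix
`C(s) = C_0 + C_1 s + ⋯ + C_l s^l`, with real entries regarded as complex. -/
noncomputable def coeffMat (n l : ℕ) (C : Matrix (Fin n) (Fin n) ℝ[X]) :
    Matrix (Fin n) (Fin (l + 1) × Fin n) ℂ :=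
  fun i q => ((C i q.2).coeff (q.1 : ℕ) : ℂ)

/-! A parameter `q` of the box is the convex combination `∑_ε w_ε(t) v_ε` of the vertices
`v_ε`, with product weights `w_ε(t) = ∏_k (t_k or 1 - t_k)`. Since each `a_i` is affine in each
coordinate, `a_i(q) = ∑_ε w_ε(t) a_i(v_ε)`, so the member at `q` and its coefficient matrix are
the same convex combination of the vertex members. The vertex LMI is linear in `(P, 𝒞)`, so
`P := ∑_ε w_ε(t) P_ε` makes the LMI at `q` a convex combination of negative definite matrices.
On the kernel of `𝒞` the terms involving `Q` vanish, which leaves the certificate of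
hypothesis H. -/

def IsMultiaffine {ι : Type*} [DecidableEq ι] (f : (ι → ℝ) → ℝ) : Prop :=
  ∀ k q, ∃ c d : ℝ, ∀ t : ℝ, f (Function.update q k t) = c + d * t

def boxVertex {ι α : Type*} (x y : ι → α) (ε : ι → Bool) : ι → α :=
  fun k => if ε k then y k else x k

def vertexWeight {ι : Type*} [Fintype ι] (t : ι → ℝ) (ε : ι → Bool) : ℝ :=
  ∏ k, if ε k then t k else 1 - t k

theorem vertexWeight_nonneg {ι : Type*} [Fintype ι] {t : ι → ℝ}
    (ht : ∀ k, t k ∈ Set.Icc 0 1) (ε : ι → Bool) : 0 ≤ vertexWeight t ε :=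
  Finset.prod_nonneg fun k _ => by split_ifs <;> linarith [(ht k).1, (ht k).2]

theorem sum_vertexWeight {ι : Type*} [Fintype ι] [DecidableEq ι] (t : ι → ℝ) :
    ∑ ε, vertexWeight t ε = 1 := by
  simp only [vertexWeight]
  rw [← Fintype.prod_sum fun k (b : Bool) => if b then t k else 1 - t k]
  simp

theorem vertexWeight_cons {m : ℕ} (t : Fin (m + 1) → ℝ) (b : Bool) (ε : Fin m → Bool) :
    vertexWeight t (Fin.cons b ε : Fin (m + 1) → Bool)
      = (if b then t 0 else 1 - t 0) * vertexWeight (fun k => t k.succ) ε := by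
  simp [vertexWeight, Fin.prod_univ_succ]

theorem boxVertex_cons {m : ℕ} {α : Type*} (x y : Fin (m + 1) → α) (b : Bool)
    (ε : Fin m → Bool) :
    boxVertex x y (Fin.cons b ε : Fin (m + 1) → Bool)
      = Fin.cons (if b then y 0 else x 0)
          (boxVertex (fun k => x k.succ) (fun k => y k.succ) ε) := by
  ext k
  cases k using Fin.cases <;> simp [boxVertex]

namespace IsMultiaffine

variable {ι : Type*} [DecidableEq ι] {f : (ι → ℝ) → ℝ}

theorem apply_update_mix (hf : IsMultiaffine f) (p : ι → ℝ) (k : ι) (t u v : ℝ) :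
    f (Function.update p k ((1 - t) * u + t * v))
      = (1 - t) * f (Function.update p k u) + t * f (Function.update p k v) := by
  obtain ⟨c, d, h⟩ := hf k p
  rw [h, h, h]
  ring

theorem comp_cons {m : ℕ} {f : (Fin (m + 1) → ℝ) → ℝ} (hf : IsMultiaffine f) (c : ℝ) :
    IsMultiaffine fun p : Fin m → ℝ => f (Fin.cons c p) := by
  intro k q
  obtain ⟨c', d, h⟩ := hf k.succ (Fin.cons c q)
  exact ⟨c', d, fun t => by simp only [Fin.cons_update, h]⟩

theorem apply_cons_mix {m : ℕ} {f : (Fin (m + 1) → ℝ) → ℝ} (hf : IsMultiaffine f)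
    (p : Fin m → ℝ) (t u v : ℝ) :
    f (Fin.cons ((1 - t) * u + t * v) p) = (1 - t) * f (Fin.cons u p) + t * f (Fin.cons v p) := by
  simpa only [Fin.update_cons_zero] using hf.apply_update_mix (Fin.cons 0 p) 0 t u v

theorem eq_sum_vertexWeight_mul {m : ℕ} {f : (Fin m → ℝ) → ℝ} (hf : IsMultiaffine f)
    (x y t : Fin m → ℝ) :
    f (fun k => (1 - t k) * x k + t k * y k)
      = ∑ ε, vertexWeight t ε * f (boxVertex x y ε) := by
  induction m with
  | zero => simpa [vertexWeight] using congrArg f (Subsingleton.elim _ _)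
  | succ m ih =>
    rw [← Fin.cons_self_tail fun k => (1 - t k) * x k + t k * y k, hf.apply_cons_mix,
      Fin.tail_def, ih (hf.comp_cons (x 0)) (fun k => x k.succ) (fun k => y k.succ)
        (fun k => t k.succ),
      ih (hf.comp_cons (y 0)),
      ← (Fin.consEquiv fun _ => Bool).sum_comp, Fintype.sum_prod_type, Fintype.sum_bool]
    simp only [Fin.consEquiv, Equiv.coe_fn_mk, vertexWeight_cons, boxVertex_cons, Finset.mul_sum,
      if_true, Bool.false_eq_true, if_false]
    rw [add_comm]
    congr 1 <;> exact Finset.sum_congr rfl fun _ _ => by ring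

end IsMultiaffine

theorem Finset.sum_smul_eq_sum_smul_sum {R M ι κ : Type*} [Semiring R] [AddCommMonoid M]
    [Module R M] [Fintype ι] [Fintype κ] {c : ι → R} (w : κ → R) (d : κ → ι → R) (A : ι → M)
    (hc : ∀ i, c i = ∑ ε, w ε * d ε i) :
    ∑ i, c i • A i = ∑ ε, w ε • ∑ i, d ε i • A i := by
  simp_rw [hc, Finset.sum_smul, Finset.smul_sum, mul_smul]
  exact Finset.sum_comm

theorem degree_sum_smul_apply_le {R ι σ τ : Type*} [Semiring R] [Fintype ι] {l : WithBot ℕ}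
    (c : ι → R) {A : ι → Matrix σ τ R[X]} (hA : ∀ i r s, (A i r s).degree ≤ l) (r : σ) (s : τ) :
    ((∑ i, c i • A i) r s).degree ≤ l := by
  rw [Matrix.sum_apply]
  exact (Polynomial.degree_sum_le _ _).trans <| Finset.sup_le fun i _ =>
    (Polynomial.degree_smul_le _ _).trans (hA i r s)

theorem coeffMat_sum_smul {κ : Type*} (s : Finset κ) (n l : ℕ) (c : κ → ℝ)
    (C : κ → Matrix (Fin n) (Fin n) ℝ[X]) :
    coeffMat n l (∑ ε ∈ s, c ε • C ε) = ∑ ε ∈ s, c ε • coeffMat n l (C ε) := by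
  ext i q
  simp [coeffMat, Matrix.sum_apply, Complex.real_smul]

section ConvexCombination

variable {ι κ : Type*} [Fintype ι] [Fintype κ] {w : κ → ℝ}

theorem re_star_dotProduct_sum_smul_mulVec (M : κ → Matrix ι ι ℂ) (x : ι → ℂ) :
    (star x ⬝ᵥ (∑ ε, w ε • M ε) *ᵥ x).re = ∑ ε, w ε * (star x ⬝ᵥ M ε *ᵥ x).re := by
  simp [Matrix.sum_mulVec, dotProduct_sum, Complex.re_sum, Matrix.smul_mulVec]

theorem IsCPosDef.sum_smul (hw₀ : ∀ ε, 0 ≤ w ε) (hw₁ : ∑ ε, w ε = 1)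
    {M : κ → Matrix ι ι ℂ} (hM : ∀ ε, IsCPosDef (M ε)) : IsCPosDef (∑ ε, w ε • M ε) := by
  refine ⟨isSelfAdjoint_sum _ fun ε _ => (hM ε).1.smul (IsSelfAdjoint.all (w ε)),
    fun x hx => ?_⟩
  obtain ⟨ε₀, -, hε₀⟩ : ∃ ε ∈ Finset.univ, (0 : κ → ℝ) ε < w ε :=
    Finset.exists_lt_of_sum_lt (by simp [hw₁])
  rw [re_star_dotProduct_sum_smul_mulVec]
  exact Finset.sum_pos' (fun ε _ => mul_nonneg (hw₀ ε) ((hM ε).2 x hx).le)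
    ⟨ε₀, Finset.mem_univ _, mul_pos hε₀ ((hM ε₀).2 x hx)⟩

theorem IsCNegDef.sum_smul (hw₀ : ∀ ε, 0 ≤ w ε) (hw₁ : ∑ ε, w ε = 1)
    {M : κ → Matrix ι ι ℂ} (hM : ∀ ε, IsCNegDef (M ε)) : IsCNegDef (∑ ε, w ε • M ε) := by
  unfold IsCNegDef
  simpa only [← Finset.sum_neg_distrib, ← smul_neg] using IsCPosDef.sum_smul hw₀ hw₁ hM

end ConvexCombination

theorem lmi_sum_smul {α β γ δ κ : Type*} [Fintype α] [Fintype β] [Fintype γ] [Fintype δ]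
    [Fintype κ] (B : Matrix α α ℂ) (R : Matrix (α × β) γ ℂ) (Q : Matrix (α × β) δ ℂ)
    (w : κ → ℝ) (P : κ → Matrix β β ℂ) (C : κ → Matrix δ γ ℂ) :
    Rᴴ * (B ⊗ₖ ∑ ε, w ε • P ε) * R + (∑ ε, w ε • C ε)ᴴ * Qᴴ * R + Rᴴ * Q * ∑ ε, w ε • C ε
      = ∑ ε, w ε • (Rᴴ * (B ⊗ₖ P ε) * R + (C ε)ᴴ * Qᴴ * R + Rᴴ * Q * C ε) := by
  have hBP : B ⊗ₖ ∑ ε, w ε • P ε = ∑ ε, w ε • B ⊗ₖ P ε := by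
    ext i j
    simp [Matrix.sum_apply, Finset.mul_sum, mul_left_comm]
  simp [hBP, Matrix.mul_sum, Matrix.sum_mul, Matrix.conjTranspose_sum, smul_add,
    Finset.sum_add_distrib]

theorem re_star_dotProduct_mulVec_neg_of_isCNegDef {ι κ κ' : Type*} [Fintype ι] [Fintype κ]
    [Fintype κ'] {K : Matrix ι ι ℂ} {C : Matrix κ ι ℂ} (Q : Matrix κ' κ ℂ) (R : Matrix κ' ι ℂ)
    (hK : IsCNegDef (K + Cᴴ * Qᴴ * R + Rᴴ * Q * C)) {x : ι → ℂ} (hx : x ≠ 0)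
    (hCx : C *ᵥ x = 0) : (star x ⬝ᵥ K *ᵥ x).re < 0 := by
  have hCQR : star x ⬝ᵥ (Cᴴ * Qᴴ * R) *ᵥ x = 0 := by
    rw [Matrix.mul_assoc, ← mulVec_mulVec, dotProduct_mulVec, ← star_mulVec, hCx]
    simp
  have hRQC : star x ⬝ᵥ (Rᴴ * Q * C) *ᵥ x = 0 := by
    rw [← mulVec_mulVec, hCx]
    simp
  simpa [neg_mulVec, add_mulVec, hCQR, hRQC] using hK.2 x hx

theorem interval_multilinear_family_robust_DB_stable_general
    (m N n l : ℕ)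
    (B : Matrix (Fin 2) (Fin 2) ℂ)
    (qL qU : Fin m → ℝ)
    (a : Fin N → (Fin m → ℝ) → ℝ)
    (ha : ∀ (i : Fin N) (k : Fin m) (q : Fin m → ℝ), ∃ c d : ℝ,
      ∀ t : ℝ, a i (Function.update q k t) = c + d * t)
    (A : Fin N → Matrix (Fin n) (Fin n) ℝ[X])
    (hAdeg : ∀ i r s, ((A i) r s).degree ≤ l)
    (hdet : ∀ q : Fin m → ℝ, (∀ i, q i ∈ Set.Icc (qL i) (qU i)) →
      (∑ i, a i q • A i).det ≠ 0)
    -- hypothesis H: the cited quadratic-stability lemma of Henrion et al.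
    (hH : ∀ C : Matrix (Fin n) (Fin n) ℝ[X],
      (∀ i j, (C i j).degree ≤ l) → C.det ≠ 0 →
      (∃ P : Matrix (Fin l × Fin n) (Fin l × Fin n) ℂ, IsCPosDef P ∧
        ∀ x : Fin (l + 1) × Fin n → ℂ, x ≠ 0 → (coeffMat n l C).mulVec x = 0 →
          (star x ⬝ᵥ ((structR n l)ᴴ * (B ⊗ₖ P) * structR n l).mulVec x).re < 0) →
      DStable (DRegion B) C)
    -- the vertex LMI feasibility data
    (Q : Matrix (Fin 2 × Fin l × Fin n) (Fin n) ℂ)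
    (P : (Fin m → Bool) → Matrix (Fin l × Fin n) (Fin l × Fin n) ℂ)
    (hP : ∀ ε, IsCPosDef (P ε))
    (hLMI : ∀ ε : Fin m → Bool,
      IsCNegDef
        ((structR n l)ᴴ * (B ⊗ₖ P ε) * structR n l
          + (coeffMat n l (∑ i, a i (fun k => if ε k then qU k else qL k) • A i))ᴴ
              * Qᴴ * structR n l
          + (structR n l)ᴴ * Q
              * coeffMat n l (∑ i, a i (fun k => if ε k then qU k else qL k) • A i))) :
    ∀ q : Fin m → ℝ, (∀ i, q i ∈ Set.Icc (qL i) (qU i)) →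
      DStable (DRegion B) (∑ i, a i q • A i) := by
  intro q hq
  have hcoord : ∀ k, ∃ t ∈ Set.Icc (0 : ℝ) 1, q k = (1 - t) * qL k + t * qU k := fun k => by
    obtain ⟨s, t, hs, ht, hst, hqk⟩ := (Convex.mem_Icc ((hq k).1.trans (hq k).2)).1 (hq k)
    exact ⟨t, ⟨ht, by linarith⟩, by rw [← hqk, ← hst]; ring⟩
  choose t ht hqt using hcoord
  have hMq : ∑ i, a i q • A i
      = ∑ ε, vertexWeight t ε • ∑ i, a i (fun k => if ε k then qU k else qL k) • A i := by
    refine Finset.sum_smul_eq_sum_smul_sum _ _ _ fun i => ?_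
    rw [show q = _ from funext hqt]
    exact IsMultiaffine.eq_sum_vertexWeight_mul (ha i) qL qU t
  refine hH _ (degree_sum_smul_apply_le _ hAdeg) (hdet q hq)
    ⟨∑ ε, vertexWeight t ε • P ε,
      IsCPosDef.sum_smul (vertexWeight_nonneg ht) (sum_vertexWeight t) hP, fun x hx hCx => ?_⟩
  refine re_star_dotProduct_mulVec_neg_of_isCNegDef Q (structR n l) ?_ hx hCx
  rw [hMq, coeffMat_sum_smul, lmi_sum_smul]
  exact IsCNegDef.sum_smul (vertexWeight_nonneg ht) (sum_vertexWeight t) hLMI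

/-- Theorem 2: under hypothesis H (Lemma 1 of Henrion et al.), if the
vertex LMIs are feasible then the interval multilinear polynomial matrix family
`MA` is robustly `D_B`-stable. -/
theorem interval_multilinear_family_robust_DB_stable
    (m N n l : ℕ)
    (B : Matrix (Fin 2) (Fin 2) ℂ) (hB : B.IsHermitian)
    (qL qU : Fin m → ℝ) (hq : ∀ i, qL i ≤ qU i)
    (a : Fin N → (Fin m → ℝ) → ℝ)
    (ha : ∀ (i : Fin N) (k : Fin m) (q : Fin m → ℝ), ∃ c d : ℝ,
      ∀ t : ℝ, a i (Function.update q k t) = c + d * t)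
    (A : Fin N → Matrix (Fin n) (Fin n) ℝ[X])
    (hAdeg : ∀ i r s, ((A i) r s).degree ≤ l)
    (hdet : ∀ q : Fin m → ℝ, (∀ i, q i ∈ Set.Icc (qL i) (qU i)) →
      (∑ i, a i q • A i).det ≠ 0)
    -- hypothesis H: the cited quadratic-stability lemma of Henrion et al.
    (hH : ∀ C : Matrix (Fin n) (Fin n) ℝ[X],
      (∀ i j, (C i j).degree ≤ l) → C.det ≠ 0 →
      (∃ P : Matrix (Fin l × Fin n) (Fin l × Fin n) ℂ, IsCPosDef P ∧
        ∀ x : Fin (l + 1) × Fin n → ℂ, x ≠ 0 → (coeffMat n l C).mulVec x = 0 →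
          (star x ⬝ᵥ ((structR n l)ᴴ * (B ⊗ₖ P) * structR n l).mulVec x).re < 0) →
      DStable (DRegion B) C)
    -- the vertex LMI feasibility data
    (Q : Matrix (Fin 2 × Fin l × Fin n) (Fin n) ℂ)
    (P : (Fin m → Bool) → Matrix (Fin l × Fin n) (Fin l × Fin n) ℂ)
    (hP : ∀ ε, IsCPosDef (P ε))
    (hLMI : ∀ ε : Fin m → Bool,
      IsCNegDef
        ((structR n l)ᴴ * (B ⊗ₖ P ε) * structR n l
          + (coeffMat n l (∑ i, a i (fun k => if ε k then qU k else qL k) • A i))ᴴ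
              * Qᴴ * structR n l
          + (structR n l)ᴴ * Q
              * coeffMat n l (∑ i, a i (fun k => if ε k then qU k else qL k) • A i))) :
    ∀ q : Fin m → ℝ, (∀ i, q i ∈ Set.Icc (qL i) (qU i)) →
      DStable (DRegion B) (∑ i, a i q • A i) :=
  interval_multilinear_family_robust_DB_stable_general m N n l B qL qU a ha A hAdeg hdet hH Q P hP
    hLMI
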